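/- In the simplex S of t-space on n taxa (after scaling so tree height is at most 1) whose vertex set is V = {(0,...,0,1,...,1) with i ones : 0 ≤ i ≤ n−1} in R^{n−1}, a facet of S is shared by another simplex of t-space if and only if it contains both the all-zeros vertex (0,...,0) and the all-ones vertex (1,...,1). -/

import Mathlib

noncomputable section

/-- Partitions of the taxon set `{1, …, n}`. -/
abbrev TreePartition (n : ℕ) := Finpartition (Finset.univ : Finset (Fin n))

/-- A ranked binary tree topology on `n` labelled leaves, encoded as a maximal merging
chain of partitions: it starts with the partition into singletons, ends with the one-block
partition, and each step merges exactly two blocks. -/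
def IsMergeChain (n : ℕ) (c : Fin n → TreePartition n) : Prop :=
  (∀ j : Fin n, (j : ℕ) = 0 →
      (c j).parts = Finset.univ.image (fun x : Fin n => ({x} : Finset (Fin n)))) ∧
  (∀ j : Fin n, (j : ℕ) = n - 1 → (c j).parts = {Finset.univ}) ∧
  (∀ j : Fin n, ∀ h : (j : ℕ) + 1 < n,
    ∃ A ∈ (c j).parts, ∃ B ∈ (c j).parts, A ≠ B ∧
      (c ⟨(j : ℕ) + 1, h⟩).parts = insert (A ∪ B) (((c j).parts.erase A).erase B))

/-- The set of ranked binary tree topologies on `n` taxa with all internal nodes of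
pairwise distinct ranks. -/
abbrev RankedTopology (n : ℕ) := {c : Fin n → TreePartition n // IsMergeChain n c}

/-- The vertex of the t-space simplex with `j` trailing ones:
`(0, …, 0, 1, …, 1) ∈ ℝ^(n-1)`. -/
def vtx (n j : ℕ) : EuclideanSpace ℝ (Fin (n - 1)) :=
  WithLp.toLp 2 (fun m => if n - 1 - j ≤ (m : ℕ) then 1 else 0)

/-!
The ends of a merge chain are rigid: level `0` is the partition into singletons and level
`n - 1` the one-block partition, so the facets forgetting these levels (those omitting
`(1,…,1)` and `(0,…,0)`) lie in a single simplex. Every other level `k` can be changed: the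
merges `k - 1 → k` and `k → k + 1` can be carried out through a different intermediate
partition (swap them if they involve four distinct blocks; if the second one absorbs the
block `A ∪ B` created by the first, merge `C` with `A` before `B`). On the geometric side,
the last coordinate separates `(0,…,0)` from the other vertices and the first coordinate
separates `(1,…,1)` from them.
-/

namespace Finpartition

variable {α : Type*} [DecidableEq α] {s : Finset α}

def IsMergeStep (P Q : Finpartition s) : Prop :=
  ∃ A ∈ P.parts, ∃ B ∈ P.parts, A ≠ B ∧ Q.parts = insert (A ∪ B) ((P.parts.erase A).erase B)

variable {P : Finpartition s} {A B X : Finset α}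

def merge (P : Finpartition s) (hA : A ∈ P.parts) (hB : B ∈ P.parts) (hAB : A ≠ B) :
    Finpartition s where
  parts := insert (A ∪ B) ((P.parts.erase A).erase B)
  supIndep := by
    rw [Finset.supIndep_iff_pairwiseDisjoint]
    have hPd := P.disjoint
    simp only [Set.PairwiseDisjoint, Set.Pairwise, Finset.coe_insert, Set.mem_insert_iff,
      Finset.mem_coe, Finset.mem_erase, Function.onFun, id] at hPd ⊢
    rintro X (rfl | ⟨hXB, hXA, hX⟩) Y (rfl | ⟨hYB, hYA, hY⟩) hXY
    · exact absurd rfl hXY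
    · exact Finset.disjoint_union_left.mpr ⟨hPd hA hY (Ne.symm hYA), hPd hB hY (Ne.symm hYB)⟩
    · exact Finset.disjoint_union_right.mpr ⟨hPd hX hA hXA, hPd hX hB hXB⟩
    · exact hPd hX hY hXY
  sup_parts := by
    conv_rhs => rw [← P.sup_parts, ← Finset.insert_erase hA,
      ← Finset.insert_erase (Finset.mem_erase.mpr ⟨hAB.symm, hB⟩)]
    simp only [Finset.sup_insert, id, Finset.sup_eq_union, Finset.union_assoc]
  bot_notMem := by
    simp only [Finset.mem_insert, Finset.mem_erase, not_or, not_and]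
    exact ⟨fun h => P.ne_bot hA (le_bot_iff.mp (h ▸ le_sup_left)), fun _ _ => P.bot_notMem⟩

lemma isMergeStep_merge (hA : A ∈ P.parts) (hB : B ∈ P.parts) (hAB : A ≠ B) :
    IsMergeStep P (P.merge hA hB hAB) := ⟨A, hA, B, hB, hAB, rfl⟩

lemma eq_or_eq_of_subset_union (hX : X ∈ P.parts) (hA : A ∈ P.parts) (hB : B ∈ P.parts)
    (h : X ⊆ A ∪ B) : X = A ∨ X = B := by
  obtain ⟨x, hx⟩ := P.nonempty_of_mem_parts hX
  rcases Finset.mem_union.mp (h hx) with hxA | hxB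
  · exact .inl (P.eq_of_mem_parts hX hA hx hxA)
  · exact .inr (P.eq_of_mem_parts hX hB hx hxB)

lemma union_notMem_parts (hA : A ∈ P.parts) (hB : B ∈ P.parts) (hAB : A ≠ B) :
    A ∪ B ∉ P.parts := by
  intro hAB'
  obtain ⟨a, ha⟩ := P.nonempty_of_mem_parts hA
  obtain ⟨b, hb⟩ := P.nonempty_of_mem_parts hB
  exact hAB ((P.eq_of_mem_parts hA hAB' ha (Finset.mem_union_left B ha)).trans
    (P.eq_of_mem_parts hB hAB' hb (Finset.mem_union_right A hb)).symm)

variable {P₀ P₁ P₂ : Finpartition s} {C D : Finset α}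

lemma exists_ne_intermediate_of_nested (hA : A ∈ P₀.parts) (hB : B ∈ P₀.parts)
    (hC : C ∈ P₀.parts) (hAB : A ≠ B) (hCA : C ≠ A) (hCB : C ≠ B)
    (h₁ : P₁.parts = insert (A ∪ B) ((P₀.parts.erase A).erase B))
    (h₂ : P₂.parts = insert (C ∪ (A ∪ B)) ((P₁.parts.erase C).erase (A ∪ B))) :
    ∃ Q ≠ P₁, IsMergeStep P₀ Q ∧ IsMergeStep Q P₂ := by
  have hAB₀ := union_notMem_parts hA hB hAB
  have hAC₀ := union_notMem_parts hA hC hCA.symm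
  have hBQ : B ∈ (P₀.merge hA hC hCA.symm).parts := by simp [merge, hAB.symm, hCB.symm, hB]
  refine ⟨P₀.merge hA hC hCA.symm, fun hQ => ?_, isMergeStep_merge .., A ∪ C, by simp [merge],
    B, hBQ, ?_, ?_⟩
  · rw [hQ, h₁] at hBQ
    grind
  · grind
  · ext X
    simp only [h₂, h₁, merge, Finset.mem_insert, Finset.mem_erase]
    grind

lemma exists_ne_intermediate_of_disjoint (hA : A ∈ P₀.parts) (hB : B ∈ P₀.parts)
    (hC : C ∈ P₀.parts) (hD : D ∈ P₀.parts) (hAB : A ≠ B) (hCD : C ≠ D)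
    (hCA : C ≠ A) (hCB : C ≠ B) (hDA : D ≠ A) (hDB : D ≠ B)
    (h₁ : P₁.parts = insert (A ∪ B) ((P₀.parts.erase A).erase B))
    (h₂ : P₂.parts = insert (C ∪ D) ((P₁.parts.erase C).erase D)) :
    ∃ Q ≠ P₁, IsMergeStep P₀ Q ∧ IsMergeStep Q P₂ := by
  have hAB₀ := union_notMem_parts hA hB hAB
  have hCD₀ := union_notMem_parts hC hD hCD
  have hCDAB : C ∪ D ≠ A ∪ B := fun h => by
    rcases eq_or_eq_of_subset_union hC hA hB (h ▸ Finset.subset_union_left) with h | h <;>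
      contradiction
  have hCDQ : C ∪ D ∈ (P₀.merge hC hD hCD).parts := Finset.mem_insert_self _ _
  refine ⟨P₀.merge hC hD hCD, fun hQ => ?_, isMergeStep_merge .., A, ?_, B, ?_, hAB, ?_⟩
  · rw [hQ, h₁] at hCDQ
    grind
  · simp [merge, hA, hCA.symm, hDA.symm]
  · simp [merge, hB, hCB.symm, hDB.symm]
  · ext X
    simp only [h₂, h₁, merge, Finset.mem_insert, Finset.mem_erase]
    grind

lemma IsMergeStep.exists_ne_intermediate (h₀₁ : IsMergeStep P₀ P₁) (h₁₂ : IsMergeStep P₁ P₂) :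
    ∃ Q ≠ P₁, IsMergeStep P₀ Q ∧ IsMergeStep Q P₂ := by
  obtain ⟨A, hA, B, hB, hAB, h₁⟩ := h₀₁
  obtain ⟨C, hC, D, hD, hCD, h₂⟩ := h₁₂
  have mem_P₀ : ∀ {X}, X ∈ P₁.parts → X ≠ A ∪ B → X ∈ P₀.parts ∧ X ≠ A ∧ X ≠ B := by
    intro X hX hXAB
    simp only [h₁, Finset.mem_insert, Finset.mem_erase] at hX
    tauto
  rcases eq_or_ne D (A ∪ B) with rfl | hDAB
  · obtain ⟨hC₀, hCA, hCB⟩ := mem_P₀ hC hCD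
    exact exists_ne_intermediate_of_nested hA hB hC₀ hAB hCA hCB h₁ h₂
  rcases eq_or_ne C (A ∪ B) with rfl | hCAB
  · obtain ⟨hD₀, hDA, hDB⟩ := mem_P₀ hD hDAB
    refine exists_ne_intermediate_of_nested hA hB hD₀ hAB hDA hDB h₁ ?_
    rw [h₂, Finset.union_comm, Finset.erase_right_comm]
  obtain ⟨hC₀, hCA, hCB⟩ := mem_P₀ hC hCAB
  obtain ⟨hD₀, hDA, hDB⟩ := mem_P₀ hD hDAB
  exact exists_ne_intermediate_of_disjoint hA hB hC₀ hD₀ hAB hCD hCA hCB hDA hDB h₁ h₂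

end Finpartition

namespace IsMergeChain

variable {n : ℕ} {c c' : Fin n → TreePartition n}

lemma isMergeStep (hc : IsMergeChain n c) {j : ℕ} (hj : j + 1 < n) :
    (c ⟨j, by omega⟩).IsMergeStep (c ⟨j + 1, hj⟩) :=
  hc.2.2 ⟨j, by omega⟩ hj

lemma eq_of_eq_off_endpoint (hc : IsMergeChain n c) (hc' : IsMergeChain n c') {k : ℕ}
    (hk : k = 0 ∨ k = n - 1) (h : ∀ j : Fin n, (j : ℕ) ≠ k → c' j = c j) : c' = c := by
  funext j
  by_cases hjk : (j : ℕ) = k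
  · apply Finpartition.ext
    rcases hk with rfl | rfl
    · rw [hc'.1 j hjk, hc.1 j hjk]
    · rw [hc'.2.1 j hjk, hc.2.1 j hjk]
  · exact h j hjk

lemma update (hc : IsMergeChain n c) {j : ℕ} (hj : j + 2 < n) {Q : TreePartition n}
    (h₀ : (c ⟨j, by omega⟩).IsMergeStep Q) (h₂ : Q.IsMergeStep (c ⟨j + 2, hj⟩)) :
    IsMergeChain n (Function.update c ⟨j + 1, by omega⟩ Q) := by
  refine ⟨fun l hl => ?_, fun l hl => ?_, fun ⟨l, hl⟩ hl' => ?_⟩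
  · rw [Function.update_of_ne (by grind)]
    exact hc.1 l hl
  · rw [Function.update_of_ne (by grind)]
    exact hc.2.1 l hl
  · simp only [Function.update_apply, Fin.ext_iff]
    split_ifs with h h'
    · omega
    · subst h
      exact h₂
    · obtain rfl : l = j := by omega
      exact h₀
    · exact hc.isMergeStep hl'

lemma exists_ne_eq_off (hc : IsMergeChain n c) {k : ℕ} (hk₀ : 0 < k) (hk : k + 1 < n) :
    ∃ c', IsMergeChain n c' ∧ c' ≠ c ∧ ∀ j : Fin n, (j : ℕ) ≠ k → c' j = c j := by
  obtain ⟨j, rfl⟩ : ∃ j, k = j + 1 := ⟨k - 1, by omega⟩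
  obtain ⟨Q, hQ, h₀, h₂⟩ :=
    (hc.isMergeStep (j := j) (by omega)).exists_ne_intermediate (hc.isMergeStep hk)
  refine ⟨_, hc.update hk h₀ h₂, fun h => hQ ?_, fun l hl => Function.update_of_ne ?_ _ _⟩
  · simpa using congrFun h ⟨j + 1, by omega⟩
  · exact fun h => hl (h ▸ rfl)

end IsMergeChain

lemma vtx_apply (n j : ℕ) (m : Fin (n - 1)) :
    vtx n j m = if n - 1 - j ≤ (m : ℕ) then 1 else 0 := rfl

lemma EuclideanSpace.apply_eq_of_mem_convexHull {ι : Type*} {S : Set (EuclideanSpace ℝ ι)}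
    {x : EuclideanSpace ℝ ι} {m : ι} {a : ℝ} (hS : ∀ y ∈ S, y m = a)
    (hx : x ∈ convexHull ℝ S) : x m = a :=
  convexHull_min hS (convex_hyperplane (EuclideanSpace.proj m).isLinear a) hx

lemma ne_zero_of_vtx_zero_mem_convexHull {n i : ℕ}
    (h : vtx n 0 ∈ convexHull ℝ (vtx n '' {j | j ≤ n - 1 ∧ j ≠ i})) : i ≠ 0 := by
  rintro rfl
  obtain ⟨_, j, hj, rfl⟩ := convexHull_nonempty_iff.mp ⟨_, h⟩
  have hlast := EuclideanSpace.apply_eq_of_mem_convexHull (m := ⟨n - 2, by grind⟩) (a := 1) ?_ h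
  · rw [vtx_apply, if_neg (by grind)] at hlast
    exact zero_ne_one hlast
  · rintro _ ⟨l, hl, rfl⟩
    rw [vtx_apply, if_pos (by grind)]

lemma ne_of_vtx_last_mem_convexHull {n i : ℕ}
    (h : vtx n (n - 1) ∈ convexHull ℝ (vtx n '' {j | j ≤ n - 1 ∧ j ≠ i})) : i ≠ n - 1 := by
  rintro rfl
  obtain ⟨_, j, hj, rfl⟩ := convexHull_nonempty_iff.mp ⟨_, h⟩
  have hfirst := EuclideanSpace.apply_eq_of_mem_convexHull (m := ⟨0, by grind⟩) (a := 0) ?_ h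
  · rw [vtx_apply, if_pos (by grind)] at hfirst
    exact one_ne_zero hfirst
  · rintro _ ⟨l, hl, rfl⟩
    rw [vtx_apply, if_neg (by grind)]

theorem shared_facets_of_tspace_simplex_general (n : ℕ)
    (c : RankedTopology n) (i : ℕ) (hi : i ≤ n - 1) :
    (∃ c' : RankedTopology n, c' ≠ c ∧
        ∀ j : Fin n, (j : ℕ) ≠ n - 1 - i → c'.1 j = c.1 j) ↔
      (vtx n 0 ∈ convexHull ℝ (vtx n '' {j | j ≤ n - 1 ∧ j ≠ i}) ∧
       vtx n (n - 1) ∈ convexHull ℝ (vtx n '' {j | j ≤ n - 1 ∧ j ≠ i})) := by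
  constructor
  · rintro ⟨c', hne, hagree⟩
    have hi₀ : i ≠ 0 := fun h =>
      hne (Subtype.ext (c.2.eq_of_eq_off_endpoint c'.2 (.inr (by omega)) hagree))
    have hiₙ : i ≠ n - 1 := fun h =>
      hne (Subtype.ext (c.2.eq_of_eq_off_endpoint c'.2 (.inl (by omega)) hagree))
    exact ⟨subset_convexHull ℝ _ ⟨0, ⟨by omega, hi₀.symm⟩, rfl⟩,
      subset_convexHull ℝ _ ⟨n - 1, ⟨le_rfl, hiₙ.symm⟩, rfl⟩⟩
  · rintro ⟨h₀, hₙ⟩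
    have hi₀ := ne_zero_of_vtx_zero_mem_convexHull h₀
    have hiₙ := ne_of_vtx_last_mem_convexHull hₙ
    obtain ⟨c', hc', hne, hagree⟩ := c.2.exists_ne_eq_off (k := n - 1 - i) (by omega) (by omega)
    exact ⟨⟨c', hc'⟩, fun h => hne (congrArg Subtype.val h), hagree⟩

/-- In the simplex of t-space on `n` taxa corresponding to a ranked topology `c` (scaled
so that the tree height is at most `1`), the facet obtained by omitting the vertex `vtx n i`
is shared by another simplex of t-space (i.e. there is a different ranked topology
agreeing with `c` at every level except the one forgotten on this facet) if and only if
the facet contains both the all-zeros vertex `(0,…,0)` and the all-ones vertex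
`(1,…,1)`. -/
theorem shared_facets_of_tspace_simplex (n : ℕ) (hn : 3 ≤ n)
    (c : RankedTopology n) (i : ℕ) (hi : i ≤ n - 1) :
    (∃ c' : RankedTopology n, c' ≠ c ∧
        ∀ j : Fin n, (j : ℕ) ≠ n - 1 - i → c'.1 j = c.1 j) ↔
      (vtx n 0 ∈ convexHull ℝ (vtx n '' {j | j ≤ n - 1 ∧ j ≠ i}) ∧
       vtx n (n - 1) ∈ convexHull ℝ (vtx n '' {j | j ≤ n - 1 ∧ j ≠ i})) :=
  shared_facets_of_tspace_simplex_general n c i hi
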